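/- Let θ be a CPWL function and let x̄, v̄, Ψ, Λ(x̄) be as in the variational-system setting with v̄ ∈ Λ(x̄). Then v̄ is a critical multiplier if and only if there exists a pair (ξ,η) ∈ ℝ^n × ℝ^m with ξ ≠ 0 such that η ∈ (D̂*∂θ)(z̄,v̄)(−∇Φ(x̄)ξ), ∇ₓΨ(x̄,v̄)ξ + ∇Φ(x̄)*η = 0, and ⟨η, ∇Φ(x̄)ξ⟩ = 0. -/

import Mathlib

/-!
Let `K = {w | ⟪d i, w⟫ ≤ 0 (i ∈ I(z̄)), ⟪a i - v̄, w⟫ ≤ 0 (i ∈ K(z̄))}` be the critical cone.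
The tangent cone to `gph ∂θ` at `(z̄, v̄)` is the graph of the normal cone mapping of `K`.
Difference quotients of graph points converge into it by monotonicity of `∂θ` and upper
semicontinuity of the active index sets. Conversely, if `u ∈ K`, `y ∈ K°` and `⟪u, y⟫ = 0`,
Farkas' lemma writes `y` as a conic combination of the generators `d i`, `a i - v̄` of `K°`;
complementary slackness keeps these generators active along `z̄ + t u`, so that
`(z̄ + t u, v̄ + t y) ∈ gph ∂θ` for small `t > 0`. Hence `(D∂θ)(z̄,v̄)(u) = N_K(u)`, and testing the
regular coderivative against the pairs `(w, 0)`, `w ∈ K`, and `(0, g)`, `g` a generator of `K°`,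
shows `η ∈ N_K(u)` iff `η ∈ (D̂*∂θ)(z̄,v̄)(-u)` and `⟪η, u⟫ = 0`.
-/

open Filter Topology Set RealInnerProductSpace

noncomputable section

abbrev Ev (k : ℕ) := EuclideanSpace ℝ (Fin k)

/-- The Bouligand–Severi tangent cone to a set `s` at `x`. -/
def tcone {E : Type*} [NormedAddCommGroup E] [NormedSpace ℝ E] (s : Set E) (x : E) : Set E :=
  {w | ∃ (z : ℕ → E) (c : ℕ → ℝ), (∀ k, z k ∈ s) ∧ (∀ k, 0 ≤ c k) ∧
      Tendsto z atTop (𝓝 x) ∧ Tendsto (fun k => c k • (z k - x)) atTop (𝓝 w)}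

/-- The data of a convex piecewise linear (CPWL) extended-real-valued function on `ℝ^m`:
`θ(z) = max_i (⟨a i, z⟩ - al i)` on the polyhedron `dom θ = {z | ⟨d i, z⟩ ≤ be i ∀ i}`,
and `θ(z) = +∞` outside of it. -/
structure CPWL (m : ℕ) where
  l : ℕ
  p : ℕ
  hl : 0 < l
  a : Fin l → Ev m
  al : Fin l → ℝ
  d : Fin p → Ev m
  be : Fin p → ℝ
  dom_nonempty : ∃ z : Ev m, ∀ i, ⟪d i, z⟫ ≤ be i

namespace CPWL

variable {m : ℕ} (θ : CPWL m)

/-- The (polyhedral) domain of the CPWL function. -/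
def dom : Set (Ev m) := {z | ∀ i, ⟪θ.d i, z⟫ ≤ θ.be i}

/-- The real value `max_i (⟨a i, z⟩ - al i)` of the CPWL function (meaningful on its domain). -/
def val (z : Ev m) : ℝ := ⨆ i : Fin θ.l, (⟪θ.a i, z⟫ - θ.al i)

/-- The CPWL function as an extended-real-valued function. -/
def eval (z : Ev m) : EReal :=
  @ite _ (z ∈ θ.dom) (Classical.propDecidable _) ((θ.val z : ℝ) : EReal) ⊤

/-- The subdifferential (of convex analysis) of the CPWL function. -/
def subdiff (z : Ev m) : Set (Ev m) :=
  {v | z ∈ θ.dom ∧ ∀ z' ∈ θ.dom, ⟪v, z' - z⟫ ≤ θ.val z' - θ.val z}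

/-- Active indices `K(z)` of the max-representation. -/
def Kact (z : Ev m) : Set (Fin θ.l) := {i | θ.val z = ⟪θ.a i, z⟫ - θ.al i}

/-- Active indices `I(z)` of the domain constraints. -/
def Iact (z : Ev m) : Set (Fin θ.p) := {i | ⟪θ.d i, z⟫ = θ.be i}

/-- The critical cone `𝒦(z̄,v̄) = {w ∈ T(z̄; dom θ) : ⟨v̄,w⟩ = θ′(z̄;w)}`. -/
def crit (zb vb : Ev m) : Set (Ev m) :=
  {w | w ∈ tcone θ.dom zb ∧
    Tendsto (fun t : ℝ => (θ.val (zb + t • w) - θ.val zb) / t) (𝓝[>] (0 : ℝ))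
      (𝓝 ⟪vb, w⟫)}

/-- The graph of the subdifferential mapping. -/
def gph : Set (Ev m × Ev m) := {zv | zv.2 ∈ θ.subdiff zv.1}

/-- The graphical derivative `(D∂θ)(z̄,v̄)(u)`. -/
def Dsub (zb vb u : Ev m) : Set (Ev m) := {w | (u, w) ∈ tcone θ.gph (zb, vb)}

/-- The regular coderivative `(D̂*∂θ)(z̄,v̄)(u)`. -/
def Dhat (zb vb u : Ev m) : Set (Ev m) :=
  {w | ∀ h ∈ tcone θ.gph (zb, vb), ⟪w, h.1⟫ - ⟪u, h.2⟫ ≤ 0}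

end CPWL

section VarSys

variable {n m : ℕ}

/-- The adjoint `∇Φ(x)*` of the Jacobian of `Φ` at `x`. -/
def adjD (Φ : Ev n → Ev m) (x : Ev n) : Ev m →L[ℝ] Ev n :=
  ContinuousLinearMap.adjoint (fderiv ℝ Φ x)

/-- `Ψ(x,v) = f(x) + ∇Φ(x)* v`. -/
def Psi (f : Ev n → Ev n) (Φ : Ev n → Ev m) (x : Ev n) (v : Ev m) : Ev n :=
  f x + adjD Φ x v

/-- The partial Jacobian `∇ₓΨ(x̄,v̄)`. -/
def gradxPsi (f : Ev n → Ev n) (Φ : Ev n → Ev m) (xb : Ev n) (vb : Ev m) :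
    Ev n →L[ℝ] Ev n :=
  fderiv ℝ (fun x => Psi f Φ x vb) xb

/-- The Lagrange multiplier set `Λ(x̄)` of the variational system. -/
def Lam (f : Ev n → Ev n) (Φ : Ev n → Ev m) (θ : CPWL m) (xb : Ev n) : Set (Ev m) :=
  {v | Psi f Φ xb v = 0 ∧ v ∈ θ.subdiff (Φ xb)}

/-- `v̄` is a critical multiplier for the variational system. -/
def IsCritical (f : Ev n → Ev n) (Φ : Ev n → Ev m) (θ : CPWL m) (xb : Ev n) (vb : Ev m) :
    Prop :=
  ∃ ξ : Ev n, ξ ≠ 0 ∧ ∃ w ∈ θ.Dsub (Φ xb) vb (fderiv ℝ Φ xb ξ),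
    gradxPsi f Φ xb vb ξ + adjD Φ xb w = 0

/-- The solution map of the canonically perturbed variational system. -/
def Smap (f : Ev n → Ev n) (Φ : Ev n → Ev m) (θ : CPWL m) (p₁ : Ev n) (p₂ : Ev m) :
    Set (Ev n × Ev m) :=
  {xv | Psi f Φ xv.1 xv.2 = p₁ ∧ xv.2 ∈ θ.subdiff (Φ xv.1 + p₂)}

end VarSys

section General

variable {n m : ℕ}

/-- The subdifferential of a general extended-real-valued function. -/
def subdiffE (θ : Ev m → EReal) (z : Ev m) : Set (Ev m) :=
  {v | ∀ z', ((⟪v, z' - z⟫ : ℝ) : EReal) ≤ θ z' - θ z}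

/-- The graph of the subdifferential of a general extended-real-valued function. -/
def gphE (θ : Ev m → EReal) : Set (Ev m × Ev m) := {zv | zv.2 ∈ subdiffE θ zv.1}

/-- The graphical derivative of the subdifferential, general case. -/
def DsubE (θ : Ev m → EReal) (zb vb u : Ev m) : Set (Ev m) :=
  {w | (u, w) ∈ tcone (gphE θ) (zb, vb)}

/-- The Lagrange multiplier set, general case. -/
def LamE (f : Ev n → Ev n) (Φ : Ev n → Ev m) (θ : Ev m → EReal) (xb : Ev n) :
    Set (Ev m) :=
  {v | Psi f Φ xb v = 0 ∧ v ∈ subdiffE θ (Φ xb)}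

/-- The solution map of the canonically perturbed variational system, general case. -/
def SmapE (f : Ev n → Ev n) (Φ : Ev n → Ev m) (θ : Ev m → EReal) (p₁ : Ev n)
    (p₂ : Ev m) : Set (Ev n × Ev m) :=
  {xv | Psi f Φ xv.1 xv.2 = p₁ ∧ xv.2 ∈ subdiffE θ (Φ xv.1 + p₂)}

end General

section Composite

variable {n m : ℕ}

/-- The gradient `∇ₓL(·,v)` of the Lagrangian `L(x,v) = φ₀(x) + ⟨Φ(x),v⟩`. -/
def gradL (φ₀ : Ev n → ℝ) (Φ : Ev n → Ev m) (v : Ev m) (x : Ev n) : Ev n :=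
  gradient (fun y => φ₀ y + ⟪Φ y, v⟫) x

/-- The Hessian `∇²ₓₓL(x̄,v)` as a linear operator. -/
def HessOp (φ₀ : Ev n → ℝ) (Φ : Ev n → Ev m) (v : Ev m) (xb : Ev n) : Ev n →L[ℝ] Ev n :=
  fderiv ℝ (gradL φ₀ Φ v) xb

/-- The Lagrange multiplier set `Λ_com(x̄)` of the composite optimization problem. -/
def LamCom (φ₀ : Ev n → ℝ) (Φ : Ev n → Ev m) (θ : CPWL m) (xb : Ev n) : Set (Ev m) :=
  {v | gradient φ₀ xb + adjD Φ xb v = 0 ∧ v ∈ θ.subdiff (Φ xb)}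

/-- Criticality of a multiplier in the composite optimization setting. -/
def IsCriticalCom (φ₀ : Ev n → ℝ) (Φ : Ev n → Ev m) (θ : CPWL m) (xb : Ev n) (v : Ev m) :
    Prop :=
  ∃ ξ : Ev n, ξ ≠ 0 ∧ ∃ w ∈ θ.Dsub (Φ xb) v (fderiv ℝ Φ xb ξ),
    HessOp φ₀ Φ v xb ξ + adjD Φ xb w = 0

/-- The solution map of the canonically perturbed KKT system of composite optimization. -/
def SKKT (φ₀ : Ev n → ℝ) (Φ : Ev n → Ev m) (θ : CPWL m) (p₁ : Ev n) (p₂ : Ev m) :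
    Set (Ev n × Ev m) :=
  {xv | gradient φ₀ xv.1 + adjD Φ xv.1 xv.2 = p₁ ∧ xv.2 ∈ θ.subdiff (Φ xv.1 + p₂)}

/-- `x̄` is a local minimizer of `φ₀ + θ∘Φ`. -/
def LocalMin (φ₀ : Ev n → ℝ) (Φ : Ev n → Ev m) (θ : CPWL m) (xb : Ev n) : Prop :=
  ∃ U ∈ 𝓝 xb, ∀ x ∈ U,
    ((φ₀ xb : ℝ) : EReal) + θ.eval (Φ xb) ≤ ((φ₀ x : ℝ) : EReal) + θ.eval (Φ x)

end Composite

section Calmness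

variable {n m : ℕ}

/-- Isolated calmness of a solution map at `((0,0), q0)`. -/
def IsolCalm (S : Ev n × Ev m → Set (Ev n × Ev m)) (q0 : Ev n × Ev m) : Prop :=
  ∃ c : ℝ, 0 ≤ c ∧ ∃ U ∈ 𝓝 (0 : Ev n × Ev m), ∃ V ∈ 𝓝 q0,
    ∀ p ∈ U, ∀ q ∈ S p ∩ V, ‖q - q0‖ ≤ c * (‖p.1‖ + ‖p.2‖)

/-- Robust isolated calmness of a solution map at `((0,0), q0)`. -/
def RobustIsolCalm (S : Ev n × Ev m → Set (Ev n × Ev m)) (q0 : Ev n × Ev m) : Prop :=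
  ∃ c : ℝ, 0 ≤ c ∧ ∃ U ∈ 𝓝 (0 : Ev n × Ev m), ∃ V ∈ 𝓝 q0,
    (∀ p ∈ U, ∀ q ∈ S p ∩ V, ‖q - q0‖ ≤ c * (‖p.1‖ + ‖p.2‖)) ∧
    (∀ p ∈ U, (S p ∩ V).Nonempty)

/-- The Lipschitz-like (Aubin) property of a solution map around `((0,0), q0)`. -/
def LipschitzLike (S : Ev n × Ev m → Set (Ev n × Ev m)) (q0 : Ev n × Ev m) : Prop :=
  ∃ c : ℝ, 0 ≤ c ∧ ∃ U ∈ 𝓝 (0 : Ev n × Ev m), ∃ V ∈ 𝓝 q0,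
    ∀ p ∈ U, ∀ p' ∈ U, ∀ q ∈ S p ∩ V, ∃ q' ∈ S p', ‖q - q'‖ ≤ c * ‖p - p'‖

end Calmness

section Farkas

variable {E : Type*} [NormedAddCommGroup E] {ι : Type*}

section Cone

variable [NormedSpace ℝ E]

def coneOn (c : ι → E) (S : Finset ι) : PointedCone ℝ E where
  carrier := {x | ∃ lam : ι → ℝ, (∀ j ∈ S, 0 ≤ lam j) ∧ x = ∑ j ∈ S, lam j • c j}
  zero_mem' := ⟨0, fun _ _ => le_rfl, by simp⟩
  add_mem' := by
    rintro _ _ ⟨lam, hlam, rfl⟩ ⟨mu, hmu, rfl⟩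
    exact ⟨lam + mu, fun j hj => add_nonneg (hlam j hj) (hmu j hj), by
      simp [add_smul, Finset.sum_add_distrib]⟩
  smul_mem' := by
    rintro r _ ⟨lam, hlam, rfl⟩
    exact ⟨fun j => r * lam j, fun j hj => mul_nonneg r.2 (hlam j hj), by
      simp [Finset.smul_sum, mul_smul]⟩

lemma mem_coneOn {c : ι → E} {S : Finset ι} {x : E} :
    x ∈ coneOn c S ↔ ∃ lam : ι → ℝ, (∀ j ∈ S, 0 ≤ lam j) ∧ x = ∑ j ∈ S, lam j • c j :=
  Iff.rfl

lemma coneOn_mono (c : ι → E) {S T : Finset ι} (hST : S ⊆ T) : coneOn c S ≤ coneOn c T := by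
  classical
  rintro _ ⟨lam, hlam, rfl⟩
  refine ⟨fun j => if j ∈ S then lam j else 0, fun j _ => ?_, ?_⟩
  · dsimp only
    split_ifs with hj
    exacts [hlam j hj, le_rfl]
  · simp only [ite_smul, zero_smul, Finset.sum_ite_mem, Finset.inter_eq_right.2 hST]

lemma mem_coneOn_of_mem (c : ι → E) {S : Finset ι} {j : ι} (hj : j ∈ S) : c j ∈ coneOn c S := by
  classical
  exact ⟨fun k => if k = j then 1 else 0, fun k _ => by dsimp only; split_ifs <;> norm_num, by
    simp [ite_smul, hj]⟩

/-- The step of Carathéodory's theorem for cones: subtract a multiple of a linear relation with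
a positive coefficient until one coefficient of the conic combination vanishes. -/
lemma exists_mem_coneOn_erase [DecidableEq ι] {c : ι → E} {S : Finset ι} {x : E}
    (hx : x ∈ coneOn c S) {f : ι → ℝ} (hf : ∑ j ∈ S, f j • c j = 0) {i : ι} (hi : i ∈ S) (hfi : 0 < f i) :
    ∃ j ∈ S, x ∈ coneOn c (S.erase j) := by
  obtain ⟨lam, hlam, rfl⟩ := hx
  set P := S.filter fun j => 0 < f j
  obtain ⟨j₀, hj₀P, hj₀min⟩ :=
    P.exists_min_image (fun j => lam j / f j) ⟨i, Finset.mem_filter.2 ⟨hi, hfi⟩⟩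
  obtain ⟨hj₀S, hfj₀⟩ := Finset.mem_filter.1 hj₀P
  set t := lam j₀ / f j₀
  have ht : 0 ≤ t := div_nonneg (hlam j₀ hj₀S) hfj₀.le
  refine ⟨j₀, hj₀S, fun j => lam j - t * f j, fun j hj => ?_, ?_⟩
  · have hjS := Finset.mem_of_mem_erase hj
    rcases lt_or_ge 0 (f j) with hfj | hfj
    · have := hj₀min j (Finset.mem_filter.2 ⟨hjS, hfj⟩)
      rw [le_div_iff₀ hfj] at this
      linarith
    · nlinarith [hlam j hjS]
  · have hj₀ : (lam j₀ - t * f j₀) • c j₀ = 0 := by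
      rw [div_mul_cancel₀ _ hfj₀.ne', sub_self, zero_smul]
    rw [Finset.sum_erase S (f := fun j => (lam j - t * f j) • c j) hj₀]
    simp [sub_smul, Finset.sum_sub_distrib, mul_smul, ← Finset.smul_sum, hf]

lemma exists_linearIndepOn_of_mem_coneOn (c : ι → E) (S : Finset ι) {x : E}
    (hx : x ∈ coneOn c S) : ∃ T ⊆ S, LinearIndepOn ℝ c (T : Set ι) ∧ x ∈ coneOn c T := by
  classical
  induction S using Finset.strongInduction with
  | H S ih =>
    by_cases hS : LinearIndepOn ℝ c (S : Set ι)
    · exact ⟨S, subset_rfl, hS, hx⟩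
    obtain ⟨f, hf, i, hi, hfi⟩ := not_linearIndepOn_finset_iff.1 hS
    obtain ⟨j, hjS, hxj⟩ : ∃ j ∈ S, x ∈ coneOn c (S.erase j) := by
      rcases hfi.lt_or_gt with hneg | hpos
      · exact exists_mem_coneOn_erase hx (f := -f) (by simp [neg_smul, hf]) hi (by simpa)
      · exact exists_mem_coneOn_erase hx hf hi hpos
    obtain ⟨T, hTS, hT, hxT⟩ := ih _ (Finset.erase_ssubset hjS) hxj
    exact ⟨T, hTS.trans (Finset.erase_subset j S), hT, hxT⟩

lemma isClosed_coneOn_of_linearIndepOn (c : ι → E) {S : Finset ι}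
    (hS : LinearIndepOn ℝ c (S : Set ι)) : IsClosed (coneOn c S : Set E) := by
  classical
  set L := Fintype.linearCombination ℝ fun j : S => c j
  have hL : IsClosedEmbedding L :=
    L.isClosedEmbedding_of_injective (LinearMap.ker_eq_bot.2
      (linearIndependent_iff_injective_fintypeLinearCombination.1 hS))
  have himage : (coneOn c S : Set E) = L '' {lam | ∀ j, 0 ≤ lam j} := by
    ext x
    simp only [SetLike.mem_coe, mem_coneOn, Set.mem_image, Set.mem_ofPred_eq, L,
      Fintype.linearCombination_apply]
    constructor
    · rintro ⟨lam, hlam, rfl⟩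
      exact ⟨fun j => lam j, fun j => hlam j j.2, Finset.sum_coe_sort S fun j => lam j • c j⟩
    · rintro ⟨lam, hlam, rfl⟩
      refine ⟨fun j => if hj : j ∈ S then lam ⟨j, hj⟩ else 0, fun j hj => by simp [hj, hlam],
        ?_⟩
      rw [← Finset.sum_coe_sort S]
      simp
  rw [himage]
  refine hL.isClosedMap _ ?_
  simp only [Set.ofPred_forall]
  exact isClosed_iInter fun j => isClosed_le continuous_const (continuous_apply j)

lemma isClosed_coneOn [Finite ι] (c : ι → E) (S : Finset ι) : IsClosed (coneOn c S : Set E) := by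
  have hunion : (coneOn c S : Set E) =
      ⋃ T ∈ {T : Finset ι | T ⊆ S ∧ LinearIndepOn ℝ c (T : Set ι)}, (coneOn c T : Set E) := by
    ext x
    simp only [Set.mem_iUnion, Set.mem_ofPred_eq, SetLike.mem_coe, exists_prop]
    constructor
    · rintro hx
      obtain ⟨T, hTS, hT, hxT⟩ := exists_linearIndepOn_of_mem_coneOn c S hx
      exact ⟨T, ⟨hTS, hT⟩, hxT⟩
    · rintro ⟨T, ⟨hTS, -⟩, hxT⟩
      exact coneOn_mono c hTS hxT
  rw [hunion]
  exact (Set.toFinite _).isClosed_biUnion fun T hT => isClosed_coneOn_of_linearIndepOn c hT.2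

end Cone

theorem mem_coneOn_of_forall_inner_nonpos [InnerProductSpace ℝ E] [CompleteSpace E] [Finite ι]
    (c : ι → E) (S : Finset ι) {h : E}
    (hh : ∀ w, (∀ j ∈ S, ⟪c j, w⟫ ≤ 0) → ⟪h, w⟫ ≤ 0) : h ∈ coneOn c S := by
  by_contra hnot
  obtain ⟨y, hy, hhy⟩ :=
    ProperCone.hyperplane_separation' (⟨coneOn c S, isClosed_coneOn c S⟩ : ProperCone ℝ E) hnot
  have := hh (-y) fun j hj => by
    simpa [inner_neg_right] using hy (c j) (mem_coneOn_of_mem c hj)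
  rw [inner_neg_right] at this
  linarith

end Farkas

lemma eventually_add_mul_lt_add_mul {α β a b : ℝ} (h : α < β) :
    ∀ᶠ t in 𝓝 (0 : ℝ), α + t * a < β + t * b :=
  ContinuousAt.eventually_lt (by fun_prop) (by fun_prop) (by simpa using h)

lemma mem_tcone_of_eventually {E : Type*} [NormedAddCommGroup E] [NormedSpace ℝ E]
    {s : Set E} {x w : E} (h : ∀ᶠ t in 𝓝[>] (0 : ℝ), x + t • w ∈ s) : w ∈ tcone s x := by
  have hu : Tendsto (fun k : ℕ => 1 / ((k : ℝ) + 1)) atTop (𝓝[>] 0) :=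
    tendsto_nhdsWithin_iff.2 ⟨tendsto_one_div_add_atTop_nhds_zero_nat,
      Eventually.of_forall fun _ => Set.mem_Ioi.2 Nat.one_div_pos_of_nat⟩
  obtain ⟨N, hN⟩ := eventually_atTop.1 (hu.eventually h)
  set u : ℕ → ℝ := fun k => 1 / ((k + N : ℕ) + 1)
  have hu_pos : ∀ k, 0 < u k := fun k => Nat.one_div_pos_of_nat
  refine ⟨fun k => x + u k • w, fun k => (u k)⁻¹, fun k => hN _ (Nat.le_add_left N k),
    fun k => (inv_pos.2 (hu_pos k)).le, ?_, ?_⟩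
  · have hu0 : Tendsto u atTop (𝓝 0) :=
      tendsto_one_div_add_atTop_nhds_zero_nat.comp (tendsto_add_atTop_nat N)
    simpa using tendsto_const_nhds.add (hu0.smul_const w)
  · refine tendsto_const_nhds.congr fun k => ?_
    simp [smul_smul, inv_mul_cancel₀ (hu_pos k).ne']

namespace CPWL

variable {m : ℕ} (θ : CPWL m)

instance : Nonempty (Fin θ.l) := ⟨⟨0, θ.hl⟩⟩

lemma le_val (z : Ev m) (i : Fin θ.l) : ⟪θ.a i, z⟫ - θ.al i ≤ θ.val z :=
  le_ciSup (f := fun i => ⟪θ.a i, z⟫ - θ.al i) (Set.finite_range _).bddAbove i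

lemma val_le {z : Ev m} {r : ℝ} (h : ∀ i, ⟪θ.a i, z⟫ - θ.al i ≤ r) : θ.val z ≤ r :=
  ciSup_le h

lemma Kact_nonempty (z : Ev m) : (θ.Kact z).Nonempty := by
  obtain ⟨i, hi⟩ := Finite.exists_max fun i : Fin θ.l => ⟪θ.a i, z⟫ - θ.al i
  exact ⟨i, le_antisymm (θ.val_le hi) (θ.le_val z i)⟩

lemma inner_a_add_smul (i : Fin θ.l) (z w : Ev m) (t : ℝ) :
    ⟪θ.a i, z + t • w⟫ - θ.al i = (⟪θ.a i, z⟫ - θ.al i) + t * ⟪θ.a i, w⟫ := by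
  rw [inner_add_right, real_inner_smul_right]; ring

lemma eventually_val_add_smul (z w : Ev m) :
    ∀ᶠ t in 𝓝[>] (0 : ℝ), ∃ i ∈ θ.Kact z, θ.val (z + t • w) = θ.val z + t * ⟪θ.a i, w⟫ := by
  have : Nonempty (θ.Kact z) := (θ.Kact_nonempty z).to_subtype
  obtain ⟨i₀, hi₀⟩ := Finite.exists_max fun i : θ.Kact z => ⟪θ.a i, w⟫
  have hle : ∀ j, ∀ᶠ t in 𝓝[>] (0 : ℝ),
      (⟪θ.a j, z⟫ - θ.al j) + t * ⟪θ.a j, w⟫ ≤ (⟪θ.a i₀, z⟫ - θ.al i₀) + t * ⟪θ.a i₀, w⟫ := by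
    intro j
    by_cases hj : j ∈ θ.Kact z
    · filter_upwards [self_mem_nhdsWithin] with t (ht : 0 < t)
      rw [← hj, ← i₀.2]
      gcongr
      exact hi₀ ⟨j, hj⟩
    · have hlt : ⟪θ.a j, z⟫ - θ.al j < ⟪θ.a i₀, z⟫ - θ.al i₀ :=
        i₀.2 ▸ (θ.le_val z j).lt_of_ne fun h => hj h.symm
      exact eventually_nhdsWithin_of_eventually_nhds
        ((eventually_add_mul_lt_add_mul hlt).mono fun t ht => ht.le)
  filter_upwards [eventually_all.2 hle] with t ht
  refine ⟨i₀, i₀.2, ?_⟩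
  have hval : θ.val (z + t • w) = ⟪θ.a i₀, z + t • w⟫ - θ.al i₀ :=
    le_antisymm (θ.val_le fun j => by simpa only [inner_a_add_smul] using ht j) (θ.le_val _ _)
  rw [hval, inner_a_add_smul, ← i₀.2]

lemma eventually_add_smul_mem_dom {z w : Ev m} (hz : z ∈ θ.dom)
    (hw : ∀ i ∈ θ.Iact z, ⟪θ.d i, w⟫ ≤ 0) : ∀ᶠ t in 𝓝[>] (0 : ℝ), z + t • w ∈ θ.dom := by
  refine eventually_all.2 fun i => ?_
  simp only [inner_add_right, real_inner_smul_right]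
  by_cases hi : i ∈ θ.Iact z
  · filter_upwards [self_mem_nhdsWithin] with t (ht : 0 < t)
    nlinarith [hw i hi, show ⟪θ.d i, z⟫ = θ.be i from hi]
  · exact eventually_nhdsWithin_of_eventually_nhds <|
      (ContinuousAt.eventually_lt (f := fun t => ⟪θ.d i, z⟫ + t * ⟪θ.d i, w⟫)
        (g := fun _ => θ.be i) (by fun_prop) (by fun_prop)
        (by simpa using (hz i).lt_of_ne hi)).mono fun _ ht => ht.le

lemma exists_mem_Kact_inner_le {z v w : Ev m} (hv : v ∈ θ.subdiff z)
    (hw : ∀ i ∈ θ.Iact z, ⟪θ.d i, w⟫ ≤ 0) : ∃ i ∈ θ.Kact z, ⟪v, w⟫ ≤ ⟪θ.a i, w⟫ := by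
  obtain ⟨t, ⟨i, hi, hval⟩, hdom, ht⟩ :=
    ((θ.eventually_val_add_smul z w).and
      ((θ.eventually_add_smul_mem_dom hv.1 hw).and self_mem_nhdsWithin)).exists
  refine ⟨i, hi, le_of_mul_le_mul_left ?_ (ht : (0 : ℝ) < t)⟩
  have := hv.2 _ hdom
  rw [add_sub_cancel_left, real_inner_smul_right, hval] at this
  linarith

lemma eventually_Kact_subset (z₀ : Ev m) : ∀ᶠ z in 𝓝 z₀, θ.Kact z ⊆ θ.Kact z₀ := by
  obtain ⟨i₀, hi₀⟩ := θ.Kact_nonempty z₀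
  have h : ∀ i, ∀ᶠ z in 𝓝 z₀, i ∈ θ.Kact z → i ∈ θ.Kact z₀ := by
    intro i
    by_cases hi : i ∈ θ.Kact z₀
    · exact Eventually.of_forall fun _ _ => hi
    have hlt : ⟪θ.a i, z₀⟫ - θ.al i < ⟪θ.a i₀, z₀⟫ - θ.al i₀ :=
      hi₀ ▸ (θ.le_val z₀ i).lt_of_ne fun h => hi h.symm
    filter_upwards [ContinuousAt.eventually_lt (f := fun z => ⟪θ.a i, z⟫ - θ.al i)
      (g := fun z => ⟪θ.a i₀, z⟫ - θ.al i₀) (by fun_prop) (by fun_prop) hlt] with z hz hiz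
    have := θ.le_val z i₀
    rw [← hiz] at hz
    linarith
  exact (eventually_all.2 h).mono fun z hz i => hz i

lemma eventually_Iact_subset (z₀ : Ev m) : ∀ᶠ z in 𝓝 z₀, θ.Iact z ⊆ θ.Iact z₀ := by
  have h : ∀ i, ∀ᶠ z in 𝓝 z₀, i ∈ θ.Iact z → i ∈ θ.Iact z₀ := by
    intro i
    by_cases hi : i ∈ θ.Iact z₀
    · exact Eventually.of_forall fun _ _ => hi
    filter_upwards [ContinuousAt.eventually_ne (g := fun z => ⟪θ.d i, z⟫) (by fun_prop) hi]
      with z hz hiz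
    exact absurd hiz hz
  exact (eventually_all.2 h).mono fun z hz i => hz i

lemma inner_sub_sub_nonneg {z z' v v' : Ev m} (hv : v ∈ θ.subdiff z) (hv' : v' ∈ θ.subdiff z') :
    0 ≤ ⟪z - z', v - v'⟫ := by
  have h := hv.2 z' hv'.1
  have h' := hv'.2 z hv.1
  rw [← neg_sub z z', inner_neg_right] at h
  rw [inner_sub_right, real_inner_comm, real_inner_comm v']
  linarith

/-- Restricted to `activeIdx z`, these generate the polar of the critical cone at `(z, v)`. -/
def critGen (v : Ev m) : Fin θ.p ⊕ Fin θ.l → Ev m := Sum.elim θ.d fun i => θ.a i - v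

def activeIdx (z : Ev m) : Set (Fin θ.p ⊕ Fin θ.l) :=
  {j | Sum.elim (· ∈ θ.Iact z) (· ∈ θ.Kact z) j}

/-- The critical cone `𝒦(z̄, v̄)` in its polyhedral form. -/
def critCone (zb vb : Ev m) : Set (Ev m) :=
  {w | ∀ j ∈ θ.activeIdx zb, ⟪θ.critGen vb j, w⟫ ≤ 0}

def critNormalGraph (zb vb : Ev m) : Set (Ev m × Ev m) :=
  {h | h.1 ∈ θ.critCone zb vb ∧ (∀ w ∈ θ.critCone zb vb, ⟪h.2, w⟫ ≤ 0) ∧ ⟪h.1, h.2⟫ = 0}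

@[simp] lemma critGen_inl (v : Ev m) (i : Fin θ.p) : θ.critGen v (.inl i) = θ.d i := rfl

@[simp] lemma critGen_inr (v : Ev m) (i : Fin θ.l) : θ.critGen v (.inr i) = θ.a i - v := rfl

@[simp] lemma inl_mem_activeIdx {z : Ev m} {i : Fin θ.p} :
    .inl i ∈ θ.activeIdx z ↔ ⟪θ.d i, z⟫ = θ.be i := Iff.rfl

@[simp] lemma inr_mem_activeIdx {z : Ev m} {i : Fin θ.l} :
    .inr i ∈ θ.activeIdx z ↔ θ.val z = ⟪θ.a i, z⟫ - θ.al i := Iff.rfl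

variable {θ}

lemma inner_critGen_sub_nonpos {z zb v : Ev m} (hv : v ∈ θ.subdiff z) (hzb : zb ∈ θ.dom)
    {j : Fin θ.p ⊕ Fin θ.l} (hj : j ∈ θ.activeIdx zb) : ⟪θ.critGen v j, z - zb⟫ ≤ 0 := by
  rcases j with i | i
  · simp only [critGen_inl, inner_sub_right, (inl_mem_activeIdx θ).1 hj]
    linarith [hv.1 i]
  · have hsub := hv.2 zb hzb
    have hval := θ.le_val z i
    rw [inr_mem_activeIdx] at hj
    simp only [critGen_inr, inner_sub_left, inner_sub_right] at hsub ⊢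
    linarith

lemma inner_critGen_le {z z' v : Ev m} (hv : v ∈ θ.subdiff z) {j : Fin θ.p ⊕ Fin θ.l}
    (hj : j ∈ θ.activeIdx z) (hz' : z' ∈ θ.dom) :
    ⟪θ.critGen v j, z' - z⟫ ≤ θ.val z' - θ.val z - ⟪v, z' - z⟫ := by
  have hsub := hv.2 z' hz'
  rcases j with i | i
  · simp only [critGen_inl, inner_sub_right, (inl_mem_activeIdx θ).1 hj] at hsub ⊢
    linarith [hz' i]
  · have hval := θ.le_val z' i
    rw [inr_mem_activeIdx] at hj
    simp only [critGen_inr, inner_sub_left, inner_sub_right] at hsub ⊢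
    linarith

lemma add_smul_sum_mem_subdiff {z v : Ev m} (hv : v ∈ θ.subdiff z)
    {S : Finset (Fin θ.p ⊕ Fin θ.l)} {lam : Fin θ.p ⊕ Fin θ.l → ℝ} (hlam : ∀ j ∈ S, 0 ≤ lam j)
    (hact : ∀ j ∈ S, lam j ≠ 0 → j ∈ θ.activeIdx z) {s : ℝ} (hs : 0 ≤ s)
    (hs₁ : s * ∑ j ∈ S, lam j ≤ 1) :
    v + s • ∑ j ∈ S, lam j • θ.critGen v j ∈ θ.subdiff z := by
  refine ⟨hv.1, fun z' hz' => ?_⟩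
  set D := θ.val z' - θ.val z - ⟪v, z' - z⟫
  have hD : 0 ≤ D := by linarith [hv.2 z' hz']
  have hsum : ⟪∑ j ∈ S, lam j • θ.critGen v j, z' - z⟫ ≤ (∑ j ∈ S, lam j) * D := by
    rw [sum_inner, Finset.sum_mul]
    refine Finset.sum_le_sum fun j hj => ?_
    rw [real_inner_smul_left]
    by_cases h0 : lam j = 0
    · simp [h0]
    · exact mul_le_mul_of_nonneg_left (inner_critGen_le hv (hact j hj h0) hz') (hlam j hj)
  rw [inner_add_left, real_inner_smul_left]
  have : s * ⟪∑ j ∈ S, lam j • θ.critGen v j, z' - z⟫ ≤ D :=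
    calc _ ≤ s * ((∑ j ∈ S, lam j) * D) := mul_le_mul_of_nonneg_left hsum hs
      _ = (s * ∑ j ∈ S, lam j) * D := by ring
      _ ≤ 1 * D := mul_le_mul_of_nonneg_right hs₁ hD
      _ = D := one_mul D
  linarith

lemma eventually_val_add_smul_of_mem_critCone {zb vb h : Ev m} (hv : vb ∈ θ.subdiff zb)
    (hh : h ∈ θ.critCone zb vb) :
    ∀ᶠ t in 𝓝[>] (0 : ℝ),
      zb + t • h ∈ θ.dom ∧ θ.val (zb + t • h) = θ.val zb + t * ⟪vb, h⟫ := by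
  have hI : ∀ i ∈ θ.Iact zb, ⟪θ.d i, h⟫ ≤ 0 := fun i hi => hh (.inl i) hi
  filter_upwards [θ.eventually_add_smul_mem_dom hv.1 hI, θ.eventually_val_add_smul zb h,
    self_mem_nhdsWithin] with t hdom ⟨i, hi, hval⟩ (ht : 0 < t)
  refine ⟨hdom, ?_⟩
  have hsub := hv.2 _ hdom
  rw [add_sub_cancel_left, real_inner_smul_right, hval] at hsub
  have hle : ⟪vb, h⟫ ≤ ⟪θ.a i, h⟫ := le_of_mul_le_mul_left (by linarith) ht
  have hge : ⟪θ.a i, h⟫ ≤ ⟪vb, h⟫ := by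
    simpa [inner_sub_left] using hh (.inr i) hi
  rw [hval, le_antisymm hge hle]

lemma mem_subdiff_of_val_add_smul {zb vb h : Ev m} {t : ℝ} (hv : vb ∈ θ.subdiff zb)
    (hdom : zb + t • h ∈ θ.dom) (hval : θ.val (zb + t • h) = θ.val zb + t * ⟪vb, h⟫) :
    vb ∈ θ.subdiff (zb + t • h) := by
  refine ⟨hdom, fun z' hz' => ?_⟩
  have := hv.2 z' hz'
  simp only [inner_sub_right, inner_add_right, real_inner_smul_right] at this ⊢
  rw [hval]
  linarith

lemma mem_activeIdx_add_smul {zb vb h : Ev m} {t : ℝ} {j : Fin θ.p ⊕ Fin θ.l}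
    (hj : j ∈ θ.activeIdx zb) (hjh : ⟪θ.critGen vb j, h⟫ = 0)
    (hval : θ.val (zb + t • h) = θ.val zb + t * ⟪vb, h⟫) : j ∈ θ.activeIdx (zb + t • h) := by
  rcases j with i | i
  · simp_all [inner_add_right, real_inner_smul_right]
  · simp only [critGen_inr, inner_sub_left, sub_eq_zero] at hjh
    rw [inr_mem_activeIdx] at hj ⊢
    rw [hval, θ.inner_a_add_smul, hjh, hj]

variable {zb vb : Ev m}

lemma tcone_gph_subset_critNormalGraph (hv : vb ∈ θ.subdiff zb) :
    tcone θ.gph (zb, vb) ⊆ θ.critNormalGraph zb vb := by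
  rintro ⟨h₁, h₂⟩ ⟨q, c, hq, hc, hq_lim, hdir⟩
  set z := fun k => (q k).1
  set v := fun k => (q k).2
  have hz : Tendsto z atTop (𝓝 zb) := (continuous_fst.tendsto _).comp hq_lim
  have hv_lim : Tendsto v atTop (𝓝 vb) := (continuous_snd.tendsto _).comp hq_lim
  have hdz : Tendsto (fun k => c k • (z k - zb)) atTop (𝓝 h₁) :=
    (continuous_fst.tendsto _).comp hdir
  have hdv : Tendsto (fun k => c k • (v k - vb)) atTop (𝓝 h₂) :=
    (continuous_snd.tendsto _).comp hdir
  have hcone : h₁ ∈ θ.critCone zb vb := by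
    intro j hj
    have hgen : Tendsto (fun k => θ.critGen (v k) j) atTop (𝓝 (θ.critGen vb j)) := by
      rcases j with i | i
      · exact tendsto_const_nhds
      · exact tendsto_const_nhds.sub hv_lim
    refine le_of_tendsto (hgen.inner hdz) (Eventually.of_forall fun k => ?_)
    rw [real_inner_smul_right]
    exact mul_nonpos_of_nonneg_of_nonpos (hc k) (inner_critGen_sub_nonpos (hq k) hv.1 hj)
  have hpolar : ∀ w ∈ θ.critCone zb vb, ⟪h₂, w⟫ ≤ 0 := by
    intro w hw
    refine le_of_tendsto (hdv.inner tendsto_const_nhds) ?_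
    filter_upwards [hz.eventually (θ.eventually_Kact_subset zb),
      hz.eventually (θ.eventually_Iact_subset zb)] with k hK hI
    obtain ⟨i, hi, hle⟩ := θ.exists_mem_Kact_inner_le (hq k) fun i hi => hw (.inl i) (hI hi)
    have := hw (.inr i) (hK hi)
    simp only [critGen_inr, inner_sub_left] at this
    rw [real_inner_smul_left, inner_sub_left]
    exact mul_nonpos_of_nonneg_of_nonpos (hc k) (by linarith)
  refine ⟨hcone, hpolar, le_antisymm ?_ ?_⟩
  · rw [real_inner_comm]
    exact hpolar h₁ hcone
  · refine ge_of_tendsto (hdz.inner hdv) (Eventually.of_forall fun k => ?_)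
    rw [real_inner_smul_left, real_inner_smul_right, ← mul_assoc]
    exact mul_nonneg (mul_nonneg (hc k) (hc k)) (θ.inner_sub_sub_nonneg (hq k) hv)

lemma critNormalGraph_subset_tcone_gph (hv : vb ∈ θ.subdiff zb) :
    θ.critNormalGraph zb vb ⊆ tcone θ.gph (zb, vb) := by
  classical
  rintro ⟨h₁, h₂⟩ ⟨hh₁, hh₂, horth⟩
  set S := Finset.univ.filter (· ∈ θ.activeIdx zb)
  have hS : ∀ {j}, j ∈ S ↔ j ∈ θ.activeIdx zb := by simp [S]
  obtain ⟨lam, hlam, rfl⟩ := mem_coneOn_of_forall_inner_nonpos (θ.critGen vb) S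
    fun w hw => hh₂ w fun j hj => hw j (hS.2 hj)
  have hslack : ∀ j ∈ S, lam j * ⟪θ.critGen vb j, h₁⟫ = 0 := by
    refine (Finset.sum_eq_zero_iff_of_nonpos fun j hj =>
      mul_nonpos_of_nonneg_of_nonpos (hlam j hj) (hh₁ j (hS.1 hj))).1 ?_
    rw [← horth, real_inner_comm, sum_inner]
    simp only [real_inner_smul_left]
  have hsmall : ∀ᶠ t in 𝓝[>] (0 : ℝ), t * ∑ j ∈ S, lam j ≤ 1 :=
    eventually_nhdsWithin_of_eventually_nhds <|
      (ContinuousAt.eventually_lt (f := fun t => t * ∑ j ∈ S, lam j) (g := fun _ => 1)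
        (by fun_prop) (by fun_prop) (by simp)).mono fun _ ht => ht.le
  -- by complementary slackness, the generators used by `h₂` stay active along `zb + t • h₁`
  refine mem_tcone_of_eventually ?_
  filter_upwards [eventually_val_add_smul_of_mem_critCone hv hh₁, hsmall, self_mem_nhdsWithin]
    with t ⟨hdom, hval⟩ ht₁ (ht : 0 < t)
  exact add_smul_sum_mem_subdiff (mem_subdiff_of_val_add_smul hv hdom hval) hlam
    (fun j hj hne => mem_activeIdx_add_smul (hS.1 hj)
      ((mul_eq_zero.1 (hslack j hj)).resolve_left hne) hval) ht.le ht₁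

lemma tcone_gph_eq (hv : vb ∈ θ.subdiff zb) : tcone θ.gph (zb, vb) = θ.critNormalGraph zb vb :=
  (tcone_gph_subset_critNormalGraph hv).antisymm (critNormalGraph_subset_tcone_gph hv)

lemma mem_Dsub_iff (hv : vb ∈ θ.subdiff zb) {u η : Ev m} :
    η ∈ θ.Dsub zb vb u ↔ η ∈ θ.Dhat zb vb (-u) ∧ ⟪η, u⟫ = 0 := by
  simp only [Dsub, Dhat, Set.mem_ofPred_eq, tcone_gph_eq hv]
  constructor
  · rintro ⟨hu, hη, huη⟩
    refine ⟨fun h hh => ?_, by rw [real_inner_comm]; exact huη⟩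
    have h₁ : ⟪η, h.1⟫ ≤ 0 := hη h.1 hh.1
    have h₂ := hh.2.1 u hu
    rw [inner_neg_left, real_inner_comm h.2 u]
    linarith
  · rintro ⟨hη, huη⟩
    refine ⟨fun j hj => ?_, fun w hw => ?_, by rw [real_inner_comm]; exact huη⟩
    · have := hη (0, θ.critGen vb j) ⟨fun _ _ => by simp, fun w hw => hw j hj, by simp⟩
      rw [inner_zero_right, inner_neg_left, real_inner_comm] at this
      linarith
    · simpa using hη (w, 0) ⟨hw, fun _ _ => by simp, by simp⟩

end CPWL

theorem stmt5_general {n m : ℕ} (θ : CPWL m) (f : Ev n → Ev n) (Φ : Ev n → Ev m)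
    (xb : Ev n) (vb : Ev m)
    (hvb : vb ∈ Lam f Φ θ xb) :
    IsCritical f Φ θ xb vb ↔
      ∃ (ξ : Ev n) (η : Ev m), ξ ≠ 0 ∧
        η ∈ θ.Dhat (Φ xb) vb (-(fderiv ℝ Φ xb ξ)) ∧
        gradxPsi f Φ xb vb ξ + adjD Φ xb η = 0 ∧
        ⟪η, fderiv ℝ Φ xb ξ⟫ = 0 := by
  simp only [IsCritical, CPWL.mem_Dsub_iff hvb.2]
  constructor
  · rintro ⟨ξ, hξ, η, ⟨hη, hη₀⟩, heq⟩
    exact ⟨ξ, η, hξ, hη, heq, hη₀⟩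
  · rintro ⟨ξ, η, hξ, hη, heq, hη₀⟩
    exact ⟨ξ, hξ, η, ⟨hη, hη₀⟩, heq⟩

/-- coderivative description of critical multipliers. -/
theorem stmt5 {n m : ℕ} (θ : CPWL m) (f : Ev n → Ev n) (Φ : Ev n → Ev m)
    (xb : Ev n) (vb : Ev m)
    (hf : DifferentiableAt ℝ f xb) (hPhi : DifferentiableAt ℝ Φ xb)
    (hPhi2 : DifferentiableAt ℝ (fderiv ℝ Φ) xb)
    (hvb : vb ∈ Lam f Φ θ xb) :
    IsCritical f Φ θ xb vb ↔
      ∃ (ξ : Ev n) (η : Ev m), ξ ≠ 0 ∧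
        η ∈ θ.Dhat (Φ xb) vb (-(fderiv ℝ Φ xb ξ)) ∧
        gradxPsi f Φ xb vb ξ + adjD Φ xb η = 0 ∧
        ⟪η, fderiv ℝ Φ xb ξ⟫ = 0 :=
  stmt5_general θ f Φ xb vb hvb
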